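/- ∫₀^{π/2} ln(1 + cos x) dx = 2G − (π/2) ln 2, where G is Catalan's constant. -/

import Mathlib

/-! With `J = ∫₀^{π/4} log cos` and `L = ∫₀^{π/4} log sin`: since `1 + cos 2x = 2 cos² x`, the
integral is `(π/2) log 2 + 4 J`. The reflection `x ↦ π/2 - x` and Euler's
`∫₀^{π/2} log sin = -(π/2) log 2` give `J + L = -(π/2) log 2`, while the substitution
`x = arctan t` gives `J - L = ∫₀^1 -log t / (1 + t²)`, which is `G` after expanding
`1 / (1 + t²)` as a geometric series and integrating termwise, `∫₀^1 t^k log t = -1/(k+1)²`. -/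

open Real

open MeasureTheory intervalIntegral Set

noncomputable def catalanG : ℝ := ∑' n : ℕ, (-1 : ℝ) ^ n / (2 * (n : ℝ) + 1) ^ 2

lemma intervalIntegrable_pow_mul_log (k : ℕ) (a b : ℝ) :
    IntervalIntegrable (fun t => t ^ k * log t) volume a b :=
  intervalIntegrable_log'.continuousOn_mul (continuous_pow k).continuousOn

lemma integral_pow_mul_log_zero_one (k : ℕ) :
    ∫ t in (0 : ℝ)..1, t ^ k * log t = -1 / ((k : ℝ) + 1) ^ 2 := by
  have hk : (k : ℝ) + 1 ≠ 0 := by positivity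
  -- `t ^ (k + 1) * log t` is written as `t ^ k * (t * log t)` to make continuity at `0` visible
  set F : ℝ → ℝ := fun t => t ^ k * (t * log t) / (k + 1) - t ^ (k + 1) / (k + 1) ^ 2
  have hF : ContinuousOn F (Icc 0 1) := by fun_prop
  have hF' : ∀ t ∈ Ioo (0 : ℝ) 1, HasDerivAt F (t ^ k * log t) t := by
    intro t ht
    refine ((((hasDerivAt_pow k t).fun_mul (hasDerivAt_mul_log ht.1.ne')).div_const
      ((k : ℝ) + 1)).fun_sub ((hasDerivAt_pow (k + 1) t).div_const (((k : ℝ) + 1) ^ 2))).congr_deriv ?_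
    rcases k with _ | k
    · simp
    · simp only [add_tsub_cancel_right, pow_succ]; push_cast; field_simp; ring
  rw [integral_eq_sub_of_hasDerivAt_of_le zero_le_one hF hF' (intervalIntegrable_pow_mul_log k 0 1)]
  simp [F]
  field_simp

lemma integrableOn_pow_mul_log_Ioo_zero_one (k : ℕ) :
    IntegrableOn (fun t => t ^ k * log t) (Ioo 0 1) :=
  ((intervalIntegrable_iff_integrableOn_Ioc_of_le zero_le_one).mp
    (intervalIntegrable_pow_mul_log k 0 1)).mono_set Ioo_subset_Ioc_self

lemma setIntegral_pow_mul_log_Ioo_zero_one (k : ℕ) :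
    ∫ t in Ioo (0 : ℝ) 1, t ^ k * log t = -1 / ((k : ℝ) + 1) ^ 2 := by
  rw [← integral_Ioc_eq_integral_Ioo, ← integral_of_le zero_le_one, integral_pow_mul_log_zero_one]

lemma hasSum_neg_one_pow_mul_pow_two_mul {t : ℝ} (ht : |t| < 1) :
    HasSum (fun n : ℕ => (-1) ^ n * t ^ (2 * n)) (1 + t ^ 2)⁻¹ := by
  have h : |-t ^ 2| < 1 := by rwa [abs_neg, abs_pow, sq_lt_one_iff_abs_lt_one, abs_abs]
  convert hasSum_geometric_of_abs_lt_one h using 1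
  · ext n; rw [pow_mul, neg_pow (t ^ 2)]
  · ring_nf

lemma summable_one_div_two_mul_add_one_sq :
    Summable fun n : ℕ => 1 / (2 * (n : ℝ) + 1) ^ 2 := by
  have := (summable_one_div_nat_pow.mpr one_lt_two).comp_injective
    (i := fun n : ℕ => 2 * n + 1) fun m n h => by simpa using h
  simpa [Function.comp_def] using this

theorem catalanG_eq_integral : catalanG = ∫ t in (0 : ℝ)..1, -log t / (1 + t ^ 2) := by
  set F : ℕ → ℝ → ℝ := fun n t => (-1) ^ n * t ^ (2 * n) * -log t
  have hF : ∀ n, F n = fun t => -(-1) ^ n * (t ^ (2 * n) * log t) := fun n => by ext; ring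
  have hF_int : ∀ n, IntegrableOn (F n) (Ioo 0 1) := fun n => by
    rw [hF]; exact (integrableOn_pow_mul_log_Ioo_zero_one (2 * n)).const_mul _
  have hF_integral : ∀ n, ∫ t in Ioo (0 : ℝ) 1, F n t = (-1) ^ n / (2 * (n : ℝ) + 1) ^ 2 := by
    intro n
    rw [hF, MeasureTheory.integral_const_mul, setIntegral_pow_mul_log_Ioo_zero_one]
    push_cast; ring
  have hF_norm : ∀ n, ∫ t in Ioo (0 : ℝ) 1, ‖F n t‖ = 1 / (2 * (n : ℝ) + 1) ^ 2 := by
    intro n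
    rw [setIntegral_congr_fun measurableSet_Ioo (g := fun t => (-1) ^ n * F n t),
      MeasureTheory.integral_const_mul, hF_integral, mul_div, ← pow_add, ← two_mul, pow_mul]
    · norm_num
    · intro t ⟨ht0, ht1⟩
      simp only [F, norm_mul, norm_pow, norm_neg, norm_one, one_pow, one_mul, Real.norm_eq_abs,
        abs_of_pos ht0, abs_of_nonpos (log_nonpos ht0.le ht1.le), ← mul_assoc, ← pow_add,
        ← two_mul, pow_mul, neg_one_sq]
  have hF_sum : ∀ t ∈ Ioo (0 : ℝ) 1, ∑' n, F n t = -log t / (1 + t ^ 2) := by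
    intro t ⟨ht0, ht1⟩
    rw [div_eq_inv_mul]
    exact ((hasSum_neg_one_pow_mul_pow_two_mul (abs_lt.mpr ⟨by linarith, ht1⟩)).mul_right _).tsum_eq
  have hF_hasSum := hasSum_integral_of_summable_integral_norm hF_int
    (by simpa only [hF_norm] using summable_one_div_two_mul_add_one_sq)
  rw [integral_of_le zero_le_one, integral_Ioc_eq_integral_Ioo,
    ← setIntegral_congr_fun measurableSet_Ioo hF_sum, ← hF_hasSum.tsum_eq, catalanG]
  simp only [hF_integral]

lemma arctan_image_Ioo_zero_one : arctan '' Ioo 0 1 = Ioo 0 (π / 4) := by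
  rw [continuous_arctan.image_Ioo_of_strictMono arctan_strictMono, arctan_zero, arctan_one]

lemma integral_neg_log_tan_zero_pi_div_four :
    ∫ x in (0 : ℝ)..(π / 4), -log (tan x) = ∫ t in (0 : ℝ)..1, -log t / (1 + t ^ 2) := by
  rw [integral_of_le (by positivity), integral_of_le zero_le_one, integral_Ioc_eq_integral_Ioo,
    integral_Ioc_eq_integral_Ioo, ← arctan_image_Ioo_zero_one,
    integral_image_eq_integral_abs_deriv_smul measurableSet_Ioo
      (fun t _ => (hasDerivAt_arctan t).hasDerivWithinAt) arctan_injective.injOn]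
  refine setIntegral_congr_fun measurableSet_Ioo fun t _ => ?_
  rw [tan_arctan, abs_of_pos (by positivity), smul_eq_mul]
  ring

lemma integral_log_cos_sub_integral_log_sin :
    (∫ x in (0 : ℝ)..(π / 4), log (cos x)) - ∫ x in (0 : ℝ)..(π / 4), log (sin x) = catalanG := by
  rw [← integral_sub (f := fun x => log (cos x)) (g := fun x => log (sin x))
    intervalIntegrable_log_cos intervalIntegrable_log_sin, catalanG_eq_integral,
    ← integral_neg_log_tan_zero_pi_div_four]
  refine integral_congr_ae (Filter.Eventually.of_forall fun x hx => ?_)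
  rw [uIoc_of_le (by positivity)] at hx
  have hsin : 0 < sin x := sin_pos_of_pos_of_lt_pi hx.1 (by linarith [hx.2, pi_pos])
  have hcos : 0 < cos x :=
    cos_pos_of_mem_Ioo ⟨by linarith [hx.1, pi_pos], by linarith [hx.2, pi_pos]⟩
  rw [tan_eq_sin_div_cos, log_div hsin.ne' hcos.ne']
  ring

lemma integral_log_cos_add_integral_log_sin :
    (∫ x in (0 : ℝ)..(π / 4), log (cos x)) + ∫ x in (0 : ℝ)..(π / 4), log (sin x) =
      -log 2 * π / 2 := by
  have h : ∫ x in (0 : ℝ)..(π / 4), log (cos x) = ∫ x in (π / 4)..(π / 2), log (sin x) := by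
    simp_rw [← sin_pi_div_two_sub]
    rw [integral_comp_sub_left (fun x => log (sin x))]
    ring_nf
  rw [h, add_comm, integral_add_adjacent_intervals (f := fun x => log (sin x))
    intervalIntegrable_log_sin intervalIntegrable_log_sin, integral_log_sin_zero_pi_div_two]

lemma log_one_add_cos_two_mul {x : ℝ} (h : cos x ≠ 0) :
    log (1 + cos (2 * x)) = log 2 + 2 * log (cos x) := by
  rw [cos_two_mul, add_sub_cancel, log_mul two_ne_zero (pow_ne_zero 2 h), log_pow]
  push_cast; ring

lemma integral_log_one_add_cos_zero_pi_div_two :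
    ∫ x in (0 : ℝ)..(π / 2), log (1 + cos x) =
      π / 2 * log 2 + 4 * ∫ x in (0 : ℝ)..(π / 4), log (cos x) := by
  have hcos : ∀ x ∈ uIcc 0 (π / 4), cos x ≠ 0 := by
    intro x hx
    rw [uIcc_of_le (by positivity)] at hx
    exact (cos_pos_of_mem_Ioo ⟨by linarith [hx.1, pi_pos], by linarith [hx.2, pi_pos]⟩).ne'
  have hhalf : ∫ x in (0 : ℝ)..(π / 2), log (1 + cos x)
      = 2 * ∫ x in (0 : ℝ)..(π / 4), log (1 + cos (2 * x)) := by
    rw [integral_comp_mul_left (fun x => log (1 + cos x)) two_ne_zero, smul_eq_mul]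
    ring_nf
  rw [hhalf, integral_congr fun x hx => log_one_add_cos_two_mul (hcos x hx),
    integral_add (g := fun x => 2 * log (cos x)) intervalIntegrable_const
      (intervalIntegrable_log_cos.const_mul 2), intervalIntegral.integral_const_mul,
    intervalIntegral.integral_const, smul_eq_mul, sub_zero]
  ring

theorem log_one_add_cos_integral :
    (∫ x in (0 : ℝ)..(π / 2), Real.log (1 + Real.cos x)) =
      2 * catalanG - (π / 2) * Real.log 2 := by
  rw [integral_log_one_add_cos_zero_pi_div_two]
  linarith [integral_log_cos_sub_integral_log_sin, integral_log_cos_add_integral_log_sin]
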